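/- For all positive integers α and k, the graph G^{α+1}_k has tree-cut width at most α+1. -/

import Mathlib

open SimpleGraph

universe u

/-- A tree-cut decomposition of a graph `G`: a finite tree `T` together with
pairwise disjoint (possibly empty) bags covering the vertex set of `G`. -/
structure TreeCutDecomp {V : Type u} (G : SimpleGraph V) where
  β : Type
  fintypeβ : Fintype β
  T : SimpleGraph β
  isTree : T.IsTree
  bag : β → Set V
  disj : Pairwise fun s t => Disjoint (bag s) (bag t)
  covers : ∀ v : V, ∃ t, v ∈ bag t

namespace TreeCutDecomp

variable {V : Type u} {G : SimpleGraph V}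

/-- The edge `e` of `G` crosses the bag at node `t`: its endpoints lie in bag-unions of
two distinct components of `T - t`. -/
def Crosses (D : TreeCutDecomp G) (t : D.β) (e : Sym2 V) : Prop :=
  e ∈ G.edgeSet ∧ ∃ (u v : V) (s₁ s₂ : D.β) (h₁ : s₁ ≠ t) (h₂ : s₂ ≠ t),
    e = s(u, v) ∧ u ∈ D.bag s₁ ∧ v ∈ D.bag s₂ ∧
    ¬ (D.T.induce {x | x ≠ t}).Reachable ⟨s₁, h₁⟩ ⟨s₂, h₂⟩

/-- The number of edges crossing the bag at node `t`. -/
noncomputable def crossNum (D : TreeCutDecomp G) (t : D.β) : ℕ :=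
  {e : Sym2 V | D.Crosses t e}.ncard

/-- The crossing number of the decomposition is at most `k`. -/
def CrossLE (D : TreeCutDecomp G) (k : ℕ) : Prop := ∀ t, D.crossNum t ≤ k

/-- The thickness (maximum bag size) of the decomposition is at most `a`. -/
def ThickLE (D : TreeCutDecomp G) (a : ℕ) : Prop := ∀ t, (D.bag t).ncard ≤ a

end TreeCutDecomp

/-- The `α`-edge-crossing width: minimum crossing number over tree-cut decompositions
of thickness at most `α`. -/
noncomputable def ecrwA {V : Type u} (G : SimpleGraph V) (a : ℕ) : ℕ :=
  sInf {k | ∃ D : TreeCutDecomp G, D.ThickLE a ∧ D.CrossLE k}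

/-- The edge-crossing width: minimum over tree-cut decompositions of the maximum of the
thickness and the crossing number. -/
noncomputable def ecrw {V : Type u} (G : SimpleGraph V) : ℕ :=
  sInf {k | ∃ D : TreeCutDecomp G, D.ThickLE k ∧ D.CrossLE k}

/-- The bipartite graph `G^n_k`: one side is `A = Fin n`, the other side consists of
pairs `(W, ℓ)` with `W` a 2-element subset of `A` and `ℓ ∈ [k]`; `a` is adjacent to
`(W, ℓ)` iff `a ∈ W`. -/
def Gnk (n k : ℕ) : SimpleGraph (Fin n ⊕ ({W : Finset (Fin n) // W.card = 2} × Fin k)) :=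
  SimpleGraph.fromRel fun x y =>
    match x, y with
    | Sum.inl a, Sum.inr (W, _) => a ∈ W.1
    | _, _ => False

open Classical

namespace TreeCutDecomp

variable {V : Type u} {G : SimpleGraph V}

/-- The union of the bags over the component of `T`-minus-the-edge-`xy` containing `x`. -/
def sideSet (D : TreeCutDecomp G) (x y : D.β) : Set V :=
  {v | ∃ s, v ∈ D.bag s ∧ (D.T.deleteEdges {s(x, y)}).Reachable s x}

/-- The adhesion of the tree edge `xy`: the set of edges of `G` crossing the
bipartition of `V(G)` induced by deleting `xy` from `T`. -/
def adhesion (D : TreeCutDecomp G) (x y : D.β) : Set (Sym2 V) :=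
  {e | e ∈ G.edgeSet ∧ ∃ u w, e = s(u, w) ∧ u ∈ D.sideSet x y ∧ w ∈ D.sideSet y x}

/-- The node of the decomposition whose bag contains `v`. -/
noncomputable def bagOf (D : TreeCutDecomp G) (v : V) : D.β := (D.covers v).choose

end TreeCutDecomp

/-- Choose some element satisfying `P`, if one exists. -/
noncomputable def pick {β : Type*} [Nonempty β] (P : β → Prop) : β :=
  if h : ∃ s, P s then h.choose else Classical.arbitrary β

/-- In a multigraph with edge multiset `E` (over vertex type `ω`), the multiset of
edge-ends at `v` (i.e. the opposite endpoints of the edges incident with `v`,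
with multiplicity; a loop at `v` contributes `v` twice). Its cardinality is the
degree of `v`. -/
noncomputable def otherEnds {ω : Type*} (v : ω) (E : Multiset (Sym2 ω)) : Multiset ω :=
  E.bind fun e =>
    Sym2.lift ⟨fun a b => (if a = v then ({b} : Multiset ω) else 0) +
      (if b = v then ({a} : Multiset ω) else 0), fun a b => by simp [add_comm]⟩ e

/-- One suppression step in a multigraph `(S, E)`: remove a vertex `v ∉ X` of degree at
most 2; if the degree is exactly 2, add an edge between the two opposite endpoints. -/
def SuppStep {ω : Type*} (X : Finset ω) :
    Finset ω × Multiset (Sym2 ω) → Finset ω × Multiset (Sym2 ω) → Prop :=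
  fun P Q => ∃ v ∈ P.1, v ∉ X ∧ Q.1 = P.1.erase v ∧
    ((Multiset.card (otherEnds v P.2) ≤ 1 ∧ Q.2 = P.2.filter fun e => ¬ v ∈ e) ∨
     (∃ a b, otherEnds v P.2 = {a, b} ∧
        Q.2 = (P.2.filter fun e => ¬ v ∈ e) + {s(a, b)}))

/-- A multigraph is terminal (for suppression outside `X`) if every vertex outside `X`
has degree at least 3. -/
def SuppTerminal {ω : Type*} (X : Finset ω) : Finset ω × Multiset (Sym2 ω) → Prop :=
  fun P => ∀ v ∈ P.1, v ∉ X → 3 ≤ Multiset.card (otherEnds v P.2)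

namespace TreeCutDecomp

variable {V : Type u} [Fintype V] {G : SimpleGraph V}

/-- The projection used to form the torso at `t`: a vertex of the bag `X_t` maps to
itself, and any other vertex maps to the consolidated vertex `z_i` of its component of
`T - t`, represented by the neighbour `s` of `t` lying in that component. -/
noncomputable def torsoProj (D : TreeCutDecomp G) (t : D.β) (v : V) : V ⊕ D.β :=
  letI : Nonempty D.β := D.isTree.isConnected.nonempty
  if v ∈ D.bag t then Sum.inl v
  else Sum.inr (pick fun s => D.T.Adj t s ∧ ∃ (h₁ : D.bagOf v ≠ t) (h₂ : s ≠ t),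
    (D.T.induce {x | x ≠ t}).Reachable ⟨D.bagOf v, h₁⟩ ⟨s, h₂⟩)

/-- The vertex set of the torso at `t`: the bag `X_t` together with one consolidated
vertex for each component of `T - t` (represented by the neighbours of `t`). -/
noncomputable def torsoVerts (D : TreeCutDecomp G) (t : D.β) : Finset (V ⊕ D.β) :=
  letI := D.fintypeβ
  (Set.toFinite {x : V ⊕ D.β |
    (∃ v ∈ D.bag t, x = Sum.inl v) ∨ ∃ s, D.T.Adj t s ∧ x = Sum.inr s}).toFinset

/-- The edge multiset of the torso at `t`: each edge of `G` is mapped by the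
consolidation projection, and the edges falling inside a single consolidated part
(loops) are discarded. -/
noncomputable def torsoEdges (D : TreeCutDecomp G) (t : D.β) : Multiset (Sym2 (V ⊕ D.β)) :=
  ((Set.toFinite G.edgeSet).toFinset.val.map (Sym2.map (D.torsoProj t))).filter
    fun e => ¬ e.IsDiag

/-- The tree-cut width of the decomposition `D` is at most `m`: all adhesions have size
at most `m`, and for each node `t`, exhaustive suppression of the degree-≤2 vertices of
the torso outside `X_t` (the 3-center) yields a multigraph with at most `m` vertices. -/
def TcwLE (D : TreeCutDecomp G) (m : ℕ) : Prop :=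
  (∀ x y : D.β, D.T.Adj x y → (D.adhesion x y).ncard ≤ m) ∧
  ∀ t : D.β, ∃ P : Finset (V ⊕ D.β) × Multiset (Sym2 (V ⊕ D.β)),
    Relation.ReflTransGen (SuppStep ((Set.toFinite (Sum.inl '' D.bag t)).toFinset))
      (D.torsoVerts t, D.torsoEdges t) P ∧
    SuppTerminal ((Set.toFinite (Sum.inl '' D.bag t)).toFinset) P ∧ P.1.card ≤ m

end TreeCutDecomp

/-- The tree-cut width of `G` (Wollan): the minimum width over all tree-cut
decompositions. -/
noncomputable def tcw {V : Type u} [Fintype V] (G : SimpleGraph V) : ℕ :=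
  sInf {m | ∃ D : TreeCutDecomp G, D.TcwLE m}

/-!
Use the star decomposition: the centre bag is `A`, and each vertex `(W, ℓ)` of `B_k` gets a
leaf of its own. Every adhesion consists of the two edges at one vertex of `B_k`. In the torso
at the centre, each consolidated vertex stands for one vertex of `B_k`: it has degree two and
both its neighbours lie in `A`, so suppressing all of them leaves exactly `A`, of size `α + 1`.
In the torso at a leaf, the single consolidated vertex is joined to the leaf's vertex by two
parallel edges, and suppressing it leaves one vertex.
-/

section Suppression

variable {ω : Type*}

theorem otherEnds_add (v : ω) (E F : Multiset (Sym2 ω)) :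
    otherEnds v (E + F) = otherEnds v E + otherEnds v F :=
  Multiset.add_bind _ _ _

theorem otherEnds_singleton_mk (v a b : ω) :
    otherEnds v {s(a, b)} = (if a = v then {b} else 0) + (if b = v then {a} else 0) := by
  simp [otherEnds]

theorem mem_otherEnds {v w : ω} {E : Multiset (Sym2 ω)} :
    w ∈ otherEnds v E ↔ s(v, w) ∈ E := by
  simp only [otherEnds, Multiset.mem_bind]
  constructor
  · rintro ⟨e, he, hw⟩
    induction e with
    | _ a b =>
      simp only [Sym2.lift_mk, Multiset.mem_add] at hw
      split_ifs at hw with ha hb <;> simp_all [Sym2.eq_swap]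
  · intro h
    refine ⟨_, h, ?_⟩
    simp

theorem otherEnds_mono (v : ω) {E F : Multiset (Sym2 ω)} (h : E ≤ F) :
    otherEnds v E ≤ otherEnds v F := by
  obtain ⟨G, rfl⟩ := Multiset.le_iff_exists_add.mp h
  rw [otherEnds_add]
  exact Multiset.le_add_right _ _

theorem card_otherEnds_of_forall_not_isDiag [DecidableEq ω] (v : ω) {E : Multiset (Sym2 ω)}
    (hE : ∀ e ∈ E, ¬ e.IsDiag) :
    Multiset.card (otherEnds v E) = Multiset.card (E.filter (v ∈ ·)) := by
  induction E using Multiset.induction_on with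
  | empty => rfl
  | cons e E ih =>
    rw [← Multiset.singleton_add, otherEnds_add, Multiset.card_add, Multiset.filter_add,
      Multiset.card_add, ih fun e' he' => hE e' (Multiset.mem_cons_of_mem he')]
    congr 1
    have he := hE e (Multiset.mem_cons_self e E)
    induction e with
    | _ a b =>
      rw [Sym2.mk_isDiag_iff] at he
      rw [otherEnds_singleton_mk, Multiset.filter_singleton]
      by_cases ha : a = v <;> by_cases hb : b = v <;> simp_all [eq_comm]

variable {X : Finset ω}

/-- Since every edge meets `X`, the neighbours of `v ∉ X` lie in `X`: the edge created by
suppressing `v` meets `X` too, and no degree outside `X` grows. -/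
theorem exists_suppStep {S : Finset ω} {E : Multiset (Sym2 ω)} {v : ω} (hv : v ∈ S)
    (hvX : v ∉ X) (hE : ∀ e ∈ E, ∃ x ∈ X, x ∈ e)
    (hdeg : Multiset.card (otherEnds v E) ≤ 2) :
    ∃ E', SuppStep X (S, E) (S.erase v, E') ∧ (∀ e ∈ E', ∃ x ∈ X, x ∈ e) ∧
      ∀ w ∉ X, otherEnds w E' ≤ otherEnds w E := by
  have hnbr : ∀ a ∈ otherEnds v E, a ∈ X := by
    intro a ha
    obtain ⟨x, hx, hxe⟩ := hE _ (mem_otherEnds.mp ha)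
    rcases Sym2.mem_iff.mp hxe with rfl | rfl
    · exact absurd hx hvX
    · exact hx
  have hfilter : ∀ e ∈ E.filter (fun e => ¬ v ∈ e), ∃ x ∈ X, x ∈ e :=
    fun e he => hE e (Multiset.mem_of_mem_filter he)
  have hfilter_le : ∀ w, otherEnds w (E.filter fun e => ¬ v ∈ e) ≤ otherEnds w E :=
    fun w => otherEnds_mono w (Multiset.filter_le _ _)
  rcases Nat.lt_or_eq_of_le hdeg with hlt | htwo
  · exact ⟨_, ⟨v, hv, hvX, rfl, Or.inl ⟨Nat.le_of_lt_succ hlt, rfl⟩⟩, hfilter,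
      fun w _ => hfilter_le w⟩
  obtain ⟨a, b, hab⟩ := Multiset.card_eq_two.mp htwo
  have ha : a ∈ X := hnbr a (by simp [hab])
  have hb : b ∈ X := hnbr b (by simp [hab])
  refine ⟨_, ⟨v, hv, hvX, rfl, Or.inr ⟨a, b, hab, rfl⟩⟩, ?_, fun w hw => ?_⟩
  · intro e he
    rcases Multiset.mem_add.mp he with he | he
    · exact hfilter e he
    · exact ⟨a, ha, (Multiset.mem_singleton.mp he) ▸ Sym2.mem_mk_left a b⟩
  · rw [otherEnds_add, otherEnds_singleton_mk, if_neg (ne_of_mem_of_not_mem ha hw),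
      if_neg (ne_of_mem_of_not_mem hb hw), add_zero, add_zero]
    exact hfilter_le w

theorem exists_suppTerminal_card_le (S : Finset ω) (E : Multiset (Sym2 ω))
    (hE : ∀ e ∈ E, ∃ x ∈ X, x ∈ e)
    (hdeg : ∀ v ∈ S, v ∉ X → Multiset.card (otherEnds v E) ≤ 2) :
    ∃ P, Relation.ReflTransGen (SuppStep X) (S, E) P ∧ SuppTerminal X P ∧
      P.1.card ≤ X.card := by
  induction S using Finset.strongInduction generalizing E with
  | H S ih =>
  by_cases hSX : ∀ v ∈ S, v ∈ X
  · exact ⟨(S, E), .refl, fun v hv hvX => absurd (hSX v hv) hvX, Finset.card_le_card hSX⟩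
  obtain ⟨v, hv, hvX⟩ := not_forall₂.mp hSX
  obtain ⟨E', hstep, hE', hle⟩ := exists_suppStep hv hvX hE (hdeg v hv hvX)
  obtain ⟨P, hP, hterm, hcard⟩ := ih _ (Finset.erase_ssubset hv) E' hE' fun w hw hwX =>
    (Multiset.card_le_card (hle w hwX)).trans (hdeg w (Finset.mem_of_mem_erase hw) hwX)
  exact ⟨P, .head hstep hP, hterm, hcard⟩

end Suppression

namespace SimpleGraph

variable {V : Type*} {G : SimpleGraph V}

theorem IsIsolated.eq_of_reachable {u v : V} (hv : G.IsIsolated v) (h : G.Reachable u v) :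
    u = v := by
  obtain ⟨p⟩ := h.symm
  cases p with
  | nil => rfl
  | cons hadj _ => exact absurd hadj (hv _)

theorem ncard_incidenceSet_eq_degree [DecidableEq V] (v : V) [Fintype (G.neighborSet v)] :
    (G.incidenceSet v).ncard = G.degree v := by
  rw [← coe_incidenceFinset, Set.ncard_coe_finset, card_incidenceFinset_eq_degree]

theorem starGraph_adj_of_ne_center {r v w : V} (hv : v ≠ r) :
    (starGraph r).Adj v w ↔ w = r := by
  simp only [starGraph_adj, hv, false_or, and_iff_right_iff_imp]
  rintro rfl
  exact hv

theorem isIsolated_deleteEdges_starGraph {r v : V} (hv : v ≠ r) :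
    ((starGraph r).deleteEdges {s(v, r)}).IsIsolated v := by
  intro w hw
  rw [deleteEdges_adj, starGraph_adj_of_ne_center hv] at hw
  exact hw.2 (hw.1 ▸ rfl)

theorem isIsolated_induce_starGraph {r : V} (v : {x | x ≠ r}) :
    ((starGraph r).induce {x | x ≠ r}).IsIsolated v := by
  rintro w ⟨-, hv | hw⟩
  exacts [v.2 hv, w.2 hw]

theorem reachable_induce_starGraph_center {r v : V} (hv : v ≠ r) (x : {x | x ≠ v}) :
    ((starGraph r).induce {x | x ≠ v}).Reachable x ⟨r, hv.symm⟩ := by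
  by_cases hx : x.1 = r
  · have : x = ⟨r, hv.symm⟩ := Subtype.ext hx
    exact this ▸ .rfl
  · exact Adj.reachable ⟨hx, Or.inr rfl⟩

end SimpleGraph

theorem pick_eq {β : Type*} [Nonempty β] {P : β → Prop} {b : β} (hb : P b)
    (huniq : ∀ b', P b' → b' = b) : pick P = b := by
  rw [pick, dif_pos ⟨b, hb⟩]
  exact huniq _ (Exists.choose_spec _)

namespace TreeCutDecomp

variable {V : Type u} {G : SimpleGraph V} (D : TreeCutDecomp G)

theorem mem_bag_bagOf (v : V) : v ∈ D.bag (D.bagOf v) :=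
  (D.covers v).choose_spec

theorem bagOf_eq_of_mem {v : V} {t : D.β} (h : v ∈ D.bag t) : D.bagOf v = t := by
  by_contra hne
  exact Set.disjoint_left.mp (D.disj hne) (D.mem_bag_bagOf v) h

/-- `s` is the neighbour of `t` that represents, in the torso at `t`, the component of
`T - t` containing the bag of `v`. -/
def IsTorsoRep (t s : D.β) (v : V) : Prop :=
  D.T.Adj t s ∧ ∃ (h₁ : D.bagOf v ≠ t) (h₂ : s ≠ t),
    (D.T.induce {x | x ≠ t}).Reachable ⟨D.bagOf v, h₁⟩ ⟨s, h₂⟩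

theorem torsoProj_of_mem {t : D.β} {v : V} (h : v ∈ D.bag t) : D.torsoProj t v = Sum.inl v :=
  if_pos h

theorem torsoProj_of_notMem {t s : D.β} {v : V} (hv : v ∉ D.bag t) (hs : D.IsTorsoRep t s v)
    (huniq : ∀ s', D.IsTorsoRep t s' v → s' = s) : D.torsoProj t v = Sum.inr s := by
  have : Nonempty D.β := D.isTree.connected.nonempty
  rw [torsoProj, if_neg hv]
  exact congrArg Sum.inr (pick_eq (P := (D.IsTorsoRep t · v)) hs huniq)

variable [Fintype V]

theorem mem_torsoEdges {t : D.β} {e : Sym2 (V ⊕ D.β)} :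
    e ∈ D.torsoEdges t ↔ ∃ u w, G.Adj u w ∧ e = s(D.torsoProj t u, D.torsoProj t w) ∧
      D.torsoProj t u ≠ D.torsoProj t w := by
  simp only [torsoEdges, Multiset.mem_filter, Multiset.mem_map, Finset.mem_val,
    Set.Finite.mem_toFinset]
  constructor
  · rintro ⟨⟨e', he', rfl⟩, hnd⟩
    induction e' with
    | _ u w => exact ⟨u, w, he', rfl, hnd⟩
  · rintro ⟨u, w, huw, rfl, hne⟩
    exact ⟨⟨s(u, w), huw, rfl⟩, hne⟩

theorem card_otherEnds_torsoEdges_le {t : D.β} (z : V ⊕ D.β) (v : V)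
    [Fintype (G.neighborSet v)]
    (h : ∀ u w, G.Adj u w → D.torsoProj t u = z → D.torsoProj t w ≠ z → v ∈ s(u, w)) :
    Multiset.card (otherEnds z (D.torsoEdges t)) ≤ G.degree v := by
  have hnd : ∀ e ∈ D.torsoEdges t, ¬ e.IsDiag := by
    intro e he
    obtain ⟨u, w, -, rfl, hne⟩ := D.mem_torsoEdges.mp he
    exact hne
  rw [card_otherEnds_of_forall_not_isDiag z hnd, torsoEdges,
    Multiset.filter_filter, Multiset.filter_map, Multiset.card_map,
    ← card_incidenceFinset_eq_degree]
  refine Multiset.card_le_card <|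
    (Multiset.le_iff_subset ((Finset.nodup _).filter _)).mpr fun e he => ?_
  rw [Multiset.mem_filter, Finset.mem_val, Set.Finite.mem_toFinset] at he
  obtain ⟨he, hz, hnd⟩ := he
  induction e with
  | _ u w =>
    rw [Finset.mem_val, mem_incidenceFinset]
    refine ⟨he, ?_⟩
    simp only [Sym2.map_mk, Sym2.mk_isDiag_iff, Sym2.mem_iff] at hnd hz
    rcases hz with rfl | rfl
    · exact h u w he rfl (Ne.symm hnd)
    · rw [Sym2.eq_swap]
      exact h w u (G.adj_symm he) rfl hnd

def ThreeCenterCardLE (t : D.β) (m : ℕ) : Prop :=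
  ∃ P : Finset (V ⊕ D.β) × Multiset (Sym2 (V ⊕ D.β)),
    Relation.ReflTransGen (SuppStep ((Set.toFinite (Sum.inl '' D.bag t)).toFinset))
      (D.torsoVerts t, D.torsoEdges t) P ∧
    SuppTerminal ((Set.toFinite (Sum.inl '' D.bag t)).toFinset) P ∧ P.1.card ≤ m

theorem ThreeCenterCardLE.mono {t : D.β} {m m' : ℕ} (h : D.ThreeCenterCardLE t m)
    (hm : m ≤ m') : D.ThreeCenterCardLE t m' :=
  let ⟨P, hP, hterm, hcard⟩ := h
  ⟨P, hP, hterm, hcard.trans hm⟩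

theorem tcwLE_iff {m : ℕ} : D.TcwLE m ↔
    (∀ x y, D.T.Adj x y → (D.adhesion x y).ncard ≤ m) ∧ ∀ t, D.ThreeCenterCardLE t m :=
  Iff.rfl

/-- Suppression deletes every consolidated vertex, leaving at most the bag `X_t`. -/
theorem threeCenterCardLE_bag (t : D.β)
    (hE : ∀ u w, G.Adj u w → D.torsoProj t u ≠ D.torsoProj t w →
      u ∈ D.bag t ∨ w ∈ D.bag t)
    (hdeg : ∀ s, D.T.Adj t s → Multiset.card (otherEnds (Sum.inr s) (D.torsoEdges t)) ≤ 2) :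
    D.ThreeCenterCardLE t (D.bag t).ncard := by
  have hmemX : ∀ v ∈ D.bag t,
      (Sum.inl v : V ⊕ D.β) ∈ (Set.toFinite (Sum.inl '' D.bag t)).toFinset :=
    fun v hv => (Set.Finite.mem_toFinset _).mpr ⟨v, hv, rfl⟩
  rw [← Set.ncard_image_of_injective _ Sum.inl_injective, Set.ncard_eq_toFinset_card _]
  refine exists_suppTerminal_card_le _ _ (fun e he => ?_) fun x hx hxX => ?_
  · obtain ⟨u, w, huw, rfl, hne⟩ := D.mem_torsoEdges.mp he
    rcases hE u w huw hne with hu | hw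
    · exact ⟨_, hmemX u hu, D.torsoProj_of_mem hu ▸ Sym2.mem_mk_left _ _⟩
    · exact ⟨_, hmemX w hw, D.torsoProj_of_mem hw ▸ Sym2.mem_mk_right _ _⟩
  · simp only [torsoVerts, Set.Finite.mem_toFinset, Set.mem_ofPred_eq] at hx
    rcases hx with ⟨v, hv, rfl⟩ | ⟨s, hs, rfl⟩
    · exact absurd (hmemX v hv) hxX
    · exact hdeg s hs

end TreeCutDecomp

section Star

open TreeCutDecomp

variable {α : Type u} {ι : Type} [Fintype ι] (G : SimpleGraph (α ⊕ ι))

@[reducible]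
def starDecomp : TreeCutDecomp G where
  β := Option ι
  fintypeβ := inferInstance
  T := starGraph none
  isTree := isTree_starGraph none
  bag t := t.elim (Set.range Sum.inl) fun i => {Sum.inr i}
  disj := by
    rintro (_ | i) (_ | j) hne
    · exact absurd rfl hne
    all_goals simp_all [Set.disjoint_left]
  covers := by
    rintro (a | i)
    exacts [⟨none, a, rfl⟩, ⟨some i, rfl⟩]

variable {G}

theorem starDecomp_torsoProj_none_inr (i : ι) :
    (starDecomp G).torsoProj none (Sum.inr i) = Sum.inr (some i) := by
  have hbag : (starDecomp G).bagOf (Sum.inr i) = some i := bagOf_eq_of_mem _ rfl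
  have hrefl : ((starGraph none).induce {x | x ≠ none}).Reachable
      ⟨(starDecomp G).bagOf (Sum.inr i), by simp [hbag]⟩ ⟨some i, by simp⟩ :=
    (Subtype.ext hbag : (⟨_, _⟩ : {x | x ≠ none}) = ⟨some i, _⟩) ▸ .rfl
  refine torsoProj_of_notMem _ (by simp) ⟨starGraph_center_adj (by simp), _, _, hrefl⟩ ?_
  rintro s ⟨-, _, _, hs⟩
  have := congrArg Subtype.val ((isIsolated_induce_starGraph _).eq_of_reachable hs)
  exact this.symm.trans hbag

theorem starDecomp_torsoProj_some {i : ι} {v : α ⊕ ι} (hv : v ≠ Sum.inr i) :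
    (starDecomp G).torsoProj (some i) v = Sum.inr none := by
  have hbag : (starDecomp G).bagOf v ≠ some i := by
    intro h
    have := (starDecomp G).mem_bag_bagOf v
    rw [h] at this
    exact hv this
  exact torsoProj_of_notMem _ hv ⟨starGraph_center_adj' (by simp), hbag, by simp,
    reachable_induce_starGraph_center (by simp) _⟩
    fun s hs => (starGraph_adj_of_ne_center (by simp)).mp hs.1

theorem starDecomp_sideSet_some_subset (i : ι) :
    (starDecomp G).sideSet (some i) none ⊆ {Sum.inr i} := by
  rintro v ⟨s, hv, hs⟩
  rwa [(isIsolated_deleteEdges_starGraph (by simp)).eq_of_reachable hs] at hv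

theorem starDecomp_adhesion_subset {x y : Option ι} (h : (starDecomp G).T.Adj x y) :
    ∃ i, (starDecomp G).adhesion x y ⊆ G.incidenceSet (Sum.inr i) := by
  obtain ⟨hne, rfl | rfl⟩ := starGraph_adj.mp h
  · obtain _ | i := y
    · exact absurd rfl hne
    refine ⟨i, ?_⟩
    rintro e ⟨he, u, w, rfl, -, hw⟩
    obtain rfl := starDecomp_sideSet_some_subset i hw
    exact ⟨he, Sym2.mem_mk_right _ _⟩
  · obtain _ | i := x
    · exact absurd rfl hne
    refine ⟨i, ?_⟩
    rintro e ⟨he, u, w, rfl, hu, -⟩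
    obtain rfl := starDecomp_sideSet_some_subset i hu
    exact ⟨he, Sym2.mem_mk_left _ _⟩

variable [Fintype α]

theorem starDecomp_threeCenterCardLE_none (hB : ∀ i j, ¬ G.Adj (Sum.inr i) (Sum.inr j))
    (hdeg : ∀ i, G.degree (Sum.inr i) ≤ 2) :
    (starDecomp G).ThreeCenterCardLE none (Fintype.card α) := by
  rw [← Nat.card_eq_fintype_card, ← Set.ncard_range_of_injective Sum.inl_injective]
  refine (starDecomp G).threeCenterCardLE_bag none (fun u w huw _ => ?_) fun s hs => ?_
  · rcases u with a | i
    · exact Or.inl ⟨a, rfl⟩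
    rcases w with a | j
    · exact Or.inr ⟨a, rfl⟩
    · exact absurd huw (hB i j)
  · obtain _ | i := s
    · exact absurd rfl (starGraph_adj.mp hs).1
    refine (card_otherEnds_torsoEdges_le _ _ (Sum.inr i) fun u w _ hu _ => ?_).trans (hdeg i)
    rcases u with a | j
    · rw [torsoProj_of_mem _ (by simp)] at hu
      cases hu
    · rw [starDecomp_torsoProj_none_inr, Sum.inr.injEq, Option.some_inj] at hu
      exact hu ▸ Sym2.mem_mk_left _ _

theorem starDecomp_threeCenterCardLE_some (hdeg : ∀ i, G.degree (Sum.inr i) ≤ 2) (i : ι) :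
    (starDecomp G).ThreeCenterCardLE (some i) 1 := by
  have hproj : ∀ v, (starDecomp G).torsoProj (some i) v ≠ Sum.inr none → v = Sum.inr i :=
    fun v hv => by_contra fun hne => hv (starDecomp_torsoProj_some hne)
  rw [← Set.ncard_singleton (Sum.inr i : α ⊕ ι)]
  refine (starDecomp G).threeCenterCardLE_bag (some i) (fun u w _ huw => ?_) fun s hs => ?_
  · by_contra! h
    exact huw ((starDecomp_torsoProj_some h.1).trans (starDecomp_torsoProj_some h.2).symm)
  · obtain rfl := (starGraph_adj_of_ne_center (by simp)).mp hs
    refine (card_otherEnds_torsoEdges_le _ _ (Sum.inr i) fun u w _ _ hw => ?_).trans (hdeg i)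
    exact hproj w hw ▸ Sym2.mem_mk_right _ _

theorem starDecomp_tcwLE (hB : ∀ i j, ¬ G.Adj (Sum.inr i) (Sum.inr j))
    (hdeg : ∀ i, G.degree (Sum.inr i) ≤ 2) {m : ℕ} (hm : 2 ≤ m)
    (hα : Fintype.card α ≤ m) :
    (starDecomp G).TcwLE m := by
  refine (tcwLE_iff _).mpr ⟨fun x y hxy => ?_, ?_⟩
  · obtain ⟨i, hsub⟩ := starDecomp_adhesion_subset hxy
    calc ((starDecomp G).adhesion x y).ncard
        ≤ (G.incidenceSet (Sum.inr i)).ncard := Set.ncard_le_ncard hsub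
      _ = G.degree (Sum.inr i) := G.ncard_incidenceSet_eq_degree _
      _ ≤ m := (hdeg i).trans hm
  rintro (_ | i)
  · exact (starDecomp_threeCenterCardLE_none hB hdeg).mono _ hα
  · exact (starDecomp_threeCenterCardLE_some hdeg i).mono _ (by omega)

end Star

theorem tcw_le_of_degree_inr_le_two {α : Type u} {ι : Type} [Fintype α] [Fintype ι]
    {G : SimpleGraph (α ⊕ ι)} (hB : ∀ i j, ¬ G.Adj (Sum.inr i) (Sum.inr j))
    (hdeg : ∀ i, G.degree (Sum.inr i) ≤ 2) {m : ℕ} (hm : 2 ≤ m)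
    (hα : Fintype.card α ≤ m) :
    tcw G ≤ m :=
  Nat.sInf_le ⟨starDecomp G, starDecomp_tcwLE hB hdeg hm hα⟩

theorem gnk_not_adj_inr_inr {n k : ℕ} (b b' : {W : Finset (Fin n) // W.card = 2} × Fin k) :
    ¬ (Gnk n k).Adj (Sum.inr b) (Sum.inr b') := by
  simp [Gnk]

theorem gnk_degree_inr {n k : ℕ} (b : {W : Finset (Fin n) // W.card = 2} × Fin k) :
    (Gnk n k).degree (Sum.inr b) = 2 := by
  have hnbr : (Gnk n k).neighborFinset (Sum.inr b) = b.1.1.map .inl := by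
    ext (a | c) <;> rw [mem_neighborFinset] <;> simp [Gnk]
  rw [← card_neighborFinset_eq_degree, hnbr, Finset.card_map, b.1.2]

theorem stmt_11_general (α k : ℕ) (hα : 0 < α) :
    tcw (Gnk (α + 1) k) ≤ α + 1 :=
  tcw_le_of_degree_inr_le_two gnk_not_adj_inr_inr (fun b => (gnk_degree_inr b).le) (by omega)
    (by simp)

/-- For all positive integers `α` and `k`, the graph `G^{α+1}_k` has tree-cut width at
most `α + 1`. -/
theorem stmt_11 (α k : ℕ) (hα : 0 < α) (hk : 0 < k) :
    tcw (Gnk (α + 1) k) ≤ α + 1 :=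
  stmt_11_general α k hα
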